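/- Let M ⊆ H²(D,Cⁿ) be a closed nearly S*-invariant subspace (defect 0). With W := M ⊖ (M ∩ zH²(D,Cⁿ)) (set W := {0} if every function in M vanishes at 0) and W₁,…,W_r an orthonormal basis of W, for every i ∈ {1,…,n} the (not necessarily closed) subspace M_i := P_i(M) is nearly S*-invariant with defect space (span{P_i(W₁),…,P_i(W_r)})/z ∩ H²(D,Cⁱ); precisely, whenever f ∈ M_i and f(0) = 0, then f/z ∈ M_i + ((span{P_i(W₁),…,P_i(W_r)})/z ∩ H²(D,Cⁱ)). -/

import Mathlib

open MeasureTheory Complex Real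
open scoped ENNReal ComplexConjugate

noncomputable section

namespace Paper

instance : Fact (0 < 2 * Real.pi) := ⟨by positivity⟩

abbrev Tc : Type := AddCircle (2 * Real.pi)
abbrev μ0 : MeasureTheory.Measure Tc := AddCircle.haarAddCircle
abbrev L2 : Type := MeasureTheory.Lp ℂ 2 μ0

def coeffCLM (n : ℤ) : L2 →L[ℂ] ℂ :=
  LinearMap.mkContinuous
    { toFun := fun f => fourierBasis.repr f n
      map_add' := fun f g => by simp
      map_smul' := fun c f => by simp }
    1
    (fun f => by
      have h := lp.norm_apply_le_norm (p := 2) (by norm_num) (fourierBasis.repr f) n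
      simpa using h)

def cf (f : L2) (n : ℤ) : ℂ := coeffCLM n f

/-- The subspace of `L²(𝕋)` of functions whose Fourier coefficients of index `< k` vanish.
Thus `coeffGE 0 = H²` and `coeffGE k = zᵏH²` for `k ≥ 0`. -/
def coeffGE (k : ℤ) : Submodule ℂ L2 :=
  ⨅ (n : ℤ) (_ : n < k), LinearMap.ker (coeffCLM n : L2 →ₗ[ℂ] ℂ)

/-- The subspace of `L²(𝕋)` of functions whose Fourier coefficients of index `≥ k` vanish.
Thus `coeffLT 0 = conj (H²₀) = (H²)^⊥`. -/
def coeffLT (k : ℤ) : Submodule ℂ L2 :=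
  ⨅ (n : ℤ) (_ : k ≤ n), LinearMap.ker (coeffCLM n : L2 →ₗ[ℂ] ℂ)

/-- The Hardy space `H²` of the unit disc, viewed as a subspace of `L²(𝕋)`. -/
def H2 : Submodule ℂ L2 := coeffGE 0

lemma mem_coeffGE {k : ℤ} {f : L2} : f ∈ coeffGE k ↔ ∀ n < k, cf f n = 0 := by
  simp [coeffGE, cf, Submodule.mem_iInf, LinearMap.mem_ker]

lemma isClosed_coeffGE (k : ℤ) : IsClosed ((coeffGE k : Submodule ℂ L2) : Set L2) := by
  have h : ((coeffGE k : Submodule ℂ L2) : Set L2)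
      = ⋂ (n : ℤ) (_ : n < k), (LinearMap.ker (coeffCLM n : L2 →ₗ[ℂ] ℂ) : Set L2) := by
    ext f
    simp [coeffGE, Submodule.mem_iInf, Set.mem_iInter]
  rw [h]
  exact isClosed_iInter fun n => isClosed_iInter fun _ => ContinuousLinearMap.isClosed_ker (coeffCLM n)

end Paper
namespace Paper

open scoped Classical in
/-- Multiplication by an `L^∞` function, as a linear map on `L²(𝕋)` (defined to be `0` if the
symbol is not essentially bounded). -/
def mulLM (g : Tc → ℂ) : L2 →ₗ[ℂ] L2 :=
  if hg : MemLp g ⊤ μ0 then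
    { toFun := fun f => ((Lp.memLp f).smul (r := 2) hg).toLp (g • ⇑f)
      map_add' := fun f₁ f₂ => by
        apply Lp.ext
        filter_upwards [MemLp.coeFn_toLp ((Lp.memLp (f₁ + f₂)).smul (r := 2) hg),
          MemLp.coeFn_toLp ((Lp.memLp f₁).smul (r := 2) hg),
          MemLp.coeFn_toLp ((Lp.memLp f₂).smul (r := 2) hg),
          Lp.coeFn_add f₁ f₂,
          Lp.coeFn_add (((Lp.memLp f₁).smul (r := 2) hg).toLp (g • ⇑f₁))
            (((Lp.memLp f₂).smul (r := 2) hg).toLp (g • ⇑f₂))] with x h0 h1 h2 h3 h4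
        rw [h0, h4, Pi.add_apply, h1, h2]
        simp only [Pi.smul_apply', Pi.add_apply, h3, smul_add]
      map_smul' := fun c f => by
        apply Lp.ext
        filter_upwards [MemLp.coeFn_toLp ((Lp.memLp (c • f)).smul (r := 2) hg),
          MemLp.coeFn_toLp ((Lp.memLp f).smul (r := 2) hg),
          Lp.coeFn_smul c f,
          Lp.coeFn_smul c (((Lp.memLp f).smul (r := 2) hg).toLp (g • ⇑f))] with x h0 h1 h3 h4
        simp only [RingHom.id_apply]
        rw [h0, h4, Pi.smul_apply, h1]
        simp only [Pi.smul_apply', Pi.smul_apply, h3]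
        exact smul_comm _ _ _ }
  else 0

end Paper
namespace Paper

/-- The orthogonal projection of `L²(𝕋)` onto a closed subspace, as a map `L² → L²`. -/
def projCLM (U : Submodule ℂ L2) (hU : IsClosed (U : Set L2)) : L2 →L[ℂ] L2 :=
  letI : CompleteSpace U := hU.completeSpace_coe
  U.subtypeL.comp U.orthogonalProjectionOnto

/-- The subspace `θH²` of `L²(𝕋)`. -/
def thetaH2 (θ : Tc → ℂ) : Submodule ℂ L2 := H2.map (mulLM θ)

/-- The model space `K_θ = H² ⊖ θH²`. -/
def Kmod (θ : Tc → ℂ) : Submodule ℂ L2 := H2 ⊓ (thetaH2 θ)ᗮ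

lemma isClosed_Kmod (θ : Tc → ℂ) : IsClosed ((Kmod θ : Submodule ℂ L2) : Set L2) :=
  (isClosed_coeffGE 0).inter (thetaH2 θ).isClosed_orthogonal

/-- The orthogonal projection `P_θ : L² → K_θ` (composed with the inclusion back into `L²`). -/
def Ptheta (θ : Tc → ℂ) : L2 →L[ℂ] L2 := projCLM (Kmod θ) (isClosed_Kmod θ)

/-- The orthogonal projection `P₊ : L² → H²`. -/
def Pplus : L2 →L[ℂ] L2 := projCLM H2 (isClosed_coeffGE 0)

/-- The independent variable `z = e^{it}`, as a function on the circle. -/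
def zf : Tc → ℂ := fun x => fourier 1 x

/-- The conjugate variable `z̄ = e^{-it}`. -/
def zbar : Tc → ℂ := fun x => fourier (-1) x

lemma memLp_fourier (n : ℤ) : MemLp (fun x : Tc => (fourier n x : ℂ)) ⊤ μ0 := by
  refine memLp_top_of_bound ((fourier n).continuous.aestronglyMeasurable) 1 ?_
  exact Filter.Eventually.of_forall fun x => le_of_eq (Circle.norm_coe _)

lemma memLp_zf : MemLp zf ⊤ μ0 := memLp_fourier 1

lemma memLp_zbar : MemLp zbar ⊤ μ0 := memLp_fourier (-1)

/-- The backward shift `S* : f ↦ (f - f(0))/z`, realised on `L²(𝕋)` as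
`f ↦ P₊(z̄ f)`; on `H²` this is the usual backward shift. -/
def Sstar : L2 →ₗ[ℂ] L2 := (Pplus : L2 →ₗ[ℂ] L2).comp (mulLM zbar)

/-- `θ` is an inner function: it is essentially bounded, unimodular a.e. on the circle, and
all its negative Fourier coefficients vanish (i.e. it is the boundary function of a bounded
analytic function on the disc). -/
structure IsInner (θ : Tc → ℂ) : Prop where
  memLinf : MemLp θ ⊤ μ0
  unimodular : ∀ᵐ x ∂μ0, ‖θ x‖ = 1
  analytic : ∀ n : ℤ, n < 0 → fourierCoeff θ n = 0

/-- Pointwise complex conjugation of a function on the circle. -/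
def conjFun (f : Tc → ℂ) : Tc → ℂ := fun x => (starRingEnd ℂ) (f x)

lemma memLp_conj {f : Tc → ℂ} {p : ℝ≥0∞} (hf : MemLp f p μ0) : MemLp (conjFun f) p μ0 := by
  refine ⟨continuous_star.comp_aestronglyMeasurable hf.1, ?_⟩
  have h : eLpNorm (conjFun f) p μ0 = eLpNorm f p μ0 :=
    eLpNorm_congr_norm_ae (Filter.Eventually.of_forall fun x => by
      simp [conjFun])
  rw [h]
  exact hf.2

/-- Complex conjugation on `L²(𝕋)`. -/
def conjL2 (f : L2) : L2 := (memLp_conj (Lp.memLp f)).toLp (conjFun ⇑f)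

end Paper
namespace Paper

/-- The set `w·U = {h ∈ L² : h = w·k (a.e.) for some k ∈ U}`, for a fixed function `w` on the
circle and a subspace `U ⊆ L²`; this is a (not necessarily closed) subspace of `L²`. -/
def mulSet (w : Tc → ℂ) (U : Submodule ℂ L2) : Submodule ℂ L2 where
  carrier := {h : L2 | ∃ k ∈ U, (⇑h : Tc → ℂ) =ᵐ[μ0] fun x => w x * (⇑k : Tc → ℂ) x}
  add_mem' := by
    rintro a b ⟨k₁, hk₁, ha⟩ ⟨k₂, hk₂, hb⟩
    refine ⟨k₁ + k₂, U.add_mem hk₁ hk₂, ?_⟩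
    filter_upwards [ha, hb, Lp.coeFn_add a b, Lp.coeFn_add k₁ k₂] with x h1 h2 h3 h4
    simp only [h3, Pi.add_apply, h1, h2, h4, mul_add]
  zero_mem' := by
    refine ⟨0, U.zero_mem, ?_⟩
    filter_upwards [Lp.coeFn_zero ℂ 2 μ0] with x h1
    simp [h1]
  smul_mem' := by
    rintro c a ⟨k, hk, ha⟩
    refine ⟨c • k, U.smul_mem c hk, ?_⟩
    filter_upwards [ha, Lp.coeFn_smul c a, Lp.coeFn_smul c k] with x h1 h2 h3
    simp only [h2, Pi.smul_apply, h1, h3, smul_eq_mul]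
    ring

/-- `f` is an outer function: `f ∈ H²` and the polynomial multiples of `f` are dense in `H²`
(i.e. `f` is cyclic for the forward shift). -/
def IsOuter (f : L2) : Prop :=
  f ∈ H2 ∧
    (Submodule.span ℂ (Set.range fun k : ℕ => ((mulLM zf) ^ k) f)).topologicalClosure = H2

/-- `h` is a cyclic vector for the backward shift `S*` on `H²`. -/
def CyclicSstar (h : L2) : Prop :=
  (Submodule.span ℂ (Set.range fun k : ℕ => (Sstar ^ k) h)).topologicalClosure = H2

/-- `d` divides `u` in the sense of inner functions. -/
def InnerDvd (d u : Tc → ℂ) : Prop :=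
  ∃ v : Tc → ℂ, IsInner v ∧ ∀ᵐ x ∂μ0, u x = d x * v x

/-- Two inner functions have greatest common inner divisor `1`, i.e. every common inner
divisor is a (necessarily unimodular) constant. -/
def CoprimeInner (u₁ u₂ : Tc → ℂ) : Prop :=
  ∀ d : Tc → ℂ, IsInner d → InnerDvd d u₁ → InnerDvd d u₂ → ∃ c : ℂ, ∀ᵐ x ∂μ0, d x = c

/-- The kernel of the truncated Toeplitz operator `A_g^θ = P_θ (g ·) : K_θ → K_θ`:
`f ∈ ker A_g^θ` iff `f ∈ K_θ` and `g f ⊥ K_θ`. -/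
def kerA (θ g : Tc → ℂ) : Submodule ℂ L2 :=
  Kmod θ ⊓ ((Kmod θ)ᗮ).comap (mulLM g)

/-- The kernel of the dual truncated Toeplitz operator `D_g^θ = Q (g ·) : K_θ^⊥ → K_θ^⊥`:
`f ∈ ker D_g^θ` iff `f ∈ K_θ^⊥` and `g f ⊥ K_θ^⊥`. -/
def kerD (θ g : Tc → ℂ) : Submodule ℂ L2 :=
  (Kmod θ)ᗮ ⊓ (((Kmod θ)ᗮ)ᗮ).comap (mulLM g)

/-- The space `A = {f ∈ ker D_g^θ : gf ∈ K_θ ∩ zH²}`. -/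
def dualA (θ g : Tc → ℂ) : Submodule ℂ L2 :=
  kerD θ g ⊓ (Kmod θ ⊓ coeffGE 1).comap (mulLM g)

/-- The space `C = ker D_g^θ ∩ (conj H²₀ ⊕ θzH²) ∩ A`. -/
def dualC (θ g : Tc → ℂ) : Submodule ℂ L2 :=
  kerD θ g ⊓ (coeffLT 0 ⊔ (coeffGE 1).map (mulLM θ)) ⊓ dualA θ g

end Paper
namespace Paper

/-- The vector-valued space `L²(𝕋, ℂⁿ)`, realised as an `ℓ²`-direct sum of `n` copies of
`L²(𝕋)`; the subspace `H2v n` below is the vector-valued Hardy space `H²(𝔻, ℂⁿ)`. -/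
abbrev Vec (n : ℕ) : Type := PiLp 2 (fun _ : Fin n => L2)

/-- The `i`-th component, as a linear map `L²(𝕋, ℂⁿ) → L²(𝕋)`. -/
def compLM {n : ℕ} (i : Fin n) : Vec n →ₗ[ℂ] L2 where
  toFun F := F i
  map_add' F G := rfl
  map_smul' c F := rfl

/-- Vector-valued analogue of `coeffGE`: `coeffGEv n 0 = H²(𝔻, ℂⁿ)` and
`coeffGEv n 1 = zH²(𝔻, ℂⁿ)`. -/
def coeffGEv (n : ℕ) (k : ℤ) : Submodule ℂ (Vec n) :=
  ⨅ i : Fin n, (coeffGE k).comap (compLM i)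

/-- The vector-valued Hardy space `H²(𝔻, ℂⁿ)`. -/
def H2v (n : ℕ) : Submodule ℂ (Vec n) := coeffGEv n 0

/-- The vector-valued model space `K_θ(𝔻, ℂⁿ)` (all components in `K_θ`). -/
def Kv (θ : Tc → ℂ) (n : ℕ) : Submodule ℂ (Vec n) :=
  ⨅ i : Fin n, (Kmod θ).comap (compLM i)

/-- Evaluation at the origin, `F ↦ F(0)`, for (Hardy-space) elements of `L²(𝕋, ℂⁿ)`. -/
def ev0 {n : ℕ} (F : Vec n) : EuclideanSpace ℂ (Fin n) := WithLp.toLp 2 (fun i => cf (F i) 0)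

/-- Evaluation at the origin as a linear map `H²(𝔻, ℂⁿ) → ℂⁿ`. -/
def ev0LM (n : ℕ) : Vec n →ₗ[ℂ] EuclideanSpace ℂ (Fin n) where
  toFun := ev0
  map_add' _F _G := by
    ext i
    simp [ev0, cf]
  map_smul' _c _F := by
    ext i
    simp [ev0, cf]

/-- The componentwise backward shift on `L²(𝕋, ℂⁿ)`. -/
def SstarV {n : ℕ} : Vec n →ₗ[ℂ] Vec n where
  toFun F := WithLp.toLp 2 (fun i => Sstar (F i))
  map_add' _F _G := by
    ext i
    simp
  map_smul' _c _F := by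
    ext i
    simp

/-- Componentwise multiplication by a scalar `L^∞` function on `L²(𝕋, ℂⁿ)`. -/
def mulVLM (g : Tc → ℂ) {n : ℕ} : Vec n →ₗ[ℂ] Vec n where
  toFun F := WithLp.toLp 2 (fun i => mulLM g (F i))
  map_add' _F _G := by
    ext i
    simp
  map_smul' _c _F := by
    ext i
    simp

/-- The projection onto the first `i` coordinates, `P_i : H²(𝔻, ℂⁿ) → H²(𝔻, ℂⁱ)`. -/
def projLE {n i : ℕ} (h : i ≤ n) : Vec n →ₗ[ℂ] Vec i where
  toFun F := WithLp.toLp 2 (fun j => F (Fin.castLE h j))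
  map_add' F G := rfl
  map_smul' c F := rfl

/-- The `i`-th row of a matrix symbol applied to a vector function:
`F ↦ ∑ j, G i j • F j`. -/
def rowLM {n : ℕ} (G : Matrix (Fin n) (Fin n) (Tc → ℂ)) (i : Fin n) : Vec n →ₗ[ℂ] L2 :=
  ∑ j : Fin n, (mulLM (G i j)).comp (compLM j)

/-- The kernel of the block Toeplitz operator `T_G = P₊(G ·)` on `H²(𝔻, ℂⁿ)`:
`F ∈ ker T_G` iff `F ∈ H²(𝔻, ℂⁿ)` and every component of `GF` is orthogonal to `H²`. -/
def kerT {n : ℕ} (G : Matrix (Fin n) (Fin n) (Tc → ℂ)) : Submodule ℂ (Vec n) :=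
  H2v n ⊓ ⨅ i : Fin n, (H2ᗮ).comap (rowLM G i)

/-- The kernel of the matrix truncated Toeplitz operator `A_G^θ = P_θ(G ·)` on `K_θ(𝔻, ℂ²)`. -/
def kerAv (θ : Tc → ℂ) (G : Matrix (Fin 2) (Fin 2) (Tc → ℂ)) : Submodule ℂ (Vec 2) :=
  Kv θ 2 ⊓ ⨅ i : Fin 2, ((Kmod θ)ᗮ).comap (rowLM G i)

/-- The scalar-type space `w·U ⊆ L²(𝕋, ℂⁿ)`, for a fixed vector function `w` and a
subspace `U ⊆ L²(𝕋)` of scalar functions. -/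
def vecMulSet {n : ℕ} (w : Vec n) (U : Submodule ℂ L2) : Submodule ℂ (Vec n) where
  carrier := {F | ∃ k ∈ U, ∀ i : Fin n,
    (⇑(F i) : Tc → ℂ) =ᵐ[μ0] fun x => (⇑(w i) : Tc → ℂ) x * (⇑k : Tc → ℂ) x}
  add_mem' := by
    rintro a b ⟨k₁, hk₁, ha⟩ ⟨k₂, hk₂, hb⟩
    refine ⟨k₁ + k₂, U.add_mem hk₁ hk₂, fun i => ?_⟩
    have hab : (a + b) i = a i + b i := rfl
    rw [hab]
    filter_upwards [ha i, hb i, Lp.coeFn_add (a i) (b i), Lp.coeFn_add k₁ k₂]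
      with x h1 h2 h3 h4
    simp only [h3, Pi.add_apply, h1, h2, h4, mul_add]
  zero_mem' := by
    refine ⟨0, U.zero_mem, fun i => ?_⟩
    have h0 : (0 : Vec n) i = 0 := rfl
    rw [h0]
    filter_upwards [Lp.coeFn_zero ℂ 2 μ0] with x h1
    simp [h1]
  smul_mem' := by
    rintro c a ⟨k, hk, ha⟩
    refine ⟨c • k, U.smul_mem c hk, fun i => ?_⟩
    have hc : (c • a) i = c • (a i) := rfl
    rw [hc]
    filter_upwards [ha i, Lp.coeFn_smul c (a i), Lp.coeFn_smul c k] with x h1 h2 h3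
    simp only [h2, Pi.smul_apply, h1, h3, smul_eq_mul]
    ring

end Paper
namespace Paper

/-- The representation `F = F₀ k₀ + z ∑ⱼ kⱼ eⱼ` of Theorem 3.4(1): here the columns of `F₀`
are `W 0, …, W (r-1)`, the `eⱼ` are an orthonormal basis of the defect space, and the
parameter `k = (k₀, k₁, …, k_m)` runs through a subspace of `H²(𝔻, ℂ^{r+m})`. -/
def rep1 {n r m : ℕ} (W : Fin r → Vec n) (e : Fin m → Vec n) (k : Vec (r + m)) (F : Vec n) :
    Prop :=
  ∀ i : Fin n,
    (⇑(F i) : Tc → ℂ) =ᵐ[μ0] fun x =>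
      (∑ j : Fin r, (⇑(k (Fin.castAdd m j)) : Tc → ℂ) x * (⇑(W j i) : Tc → ℂ) x) +
        zf x * ∑ j : Fin m, (⇑(k (Fin.natAdd r j)) : Tc → ℂ) x * (⇑(e j i) : Tc → ℂ) x

/-- The representation `F = z ∑ⱼ kⱼ eⱼ` of Theorem 3.4(2). -/
def rep2 {n m : ℕ} (e : Fin m → Vec n) (k : Vec m) (F : Vec n) : Prop :=
  ∀ i : Fin n,
    (⇑(F i) : Tc → ℂ) =ᵐ[μ0] fun x =>
      zf x * ∑ j : Fin m, (⇑(k j) : Tc → ℂ) x * (⇑(e j i) : Tc → ℂ) x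

end Paper
/-! Split `F ∈ M` with `P_i F = f` as `F = G + w`, where `G` is the orthogonal projection of `F`
onto `M ∩ zH²` and `w ∈ M ⊖ (M ∩ zH²) = span W`. Since `G(0) = 0`, near invariance gives
`S*G ∈ M`; and `P_i w = f - P_i G` vanishes at `0`, so `S*(P_i w) = P_i w / z` lies in
`span{P_i W_j}/z ∩ H²`. Hence `S*f = P_i(S*G) + S*(P_i w)`. -/

namespace Submodule

theorem exists_add_mem_mem_inf_orthogonal {𝕜 E : Type*} [RCLike 𝕜]
    [NormedAddCommGroup E] [InnerProductSpace 𝕜 E] {M N : Submodule 𝕜 E}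
    [N.HasOrthogonalProjection] (hNM : N ≤ M) {v : E} (hv : v ∈ M) :
    ∃ y ∈ N, ∃ z ∈ M ⊓ Nᗮ, v = y + z := by
  obtain ⟨y, hy, z, hz, rfl⟩ := N.exists_add_mem_mem_orthogonal v
  refine ⟨y, hy, z, ⟨?_, hz⟩, rfl⟩
  simpa using M.sub_mem hv (hNM hy)

end Submodule

namespace Paper

lemma cf_eq_fourierCoeff (f : L2) (k : ℤ) : cf f k = fourierCoeff (⇑f) k := by
  simpa [cf, coeffCLM, LinearMap.mkContinuous_apply] using fourierBasis_repr f k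

lemma mem_coeffGE_one_iff {f : L2} : f ∈ coeffGE 1 ↔ f ∈ H2 ∧ cf f 0 = 0 := by
  simp only [H2, mem_coeffGE]
  refine ⟨fun h => ⟨fun k hk => h k (by omega), h 0 one_pos⟩, fun ⟨h, h0⟩ k hk => ?_⟩
  rcases (show k ≤ 0 by omega).lt_or_eq with hk | rfl
  exacts [h k hk, h0]

lemma coeFn_mulLM {g : Tc → ℂ} (hg : MemLp g ⊤ μ0) (f : L2) :
    (⇑(mulLM g f) : Tc → ℂ) =ᵐ[μ0] fun x => g x * f x := by
  simp only [mulLM, dif_pos hg, LinearMap.coe_mk, AddHom.coe_mk]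
  filter_upwards [MemLp.coeFn_toLp ((Lp.memLp f).smul (r := 2) hg)] with x hx
  simpa [Pi.smul_apply'] using hx

lemma cf_mulLM_zbar (f : L2) (k : ℤ) : cf (mulLM zbar f) k = cf f (k + 1) := by
  rw [cf_eq_fourierCoeff, cf_eq_fourierCoeff]
  refine integral_congr_ae ?_
  filter_upwards [coeFn_mulLM memLp_zbar f] with x hx
  rw [hx, smul_eq_mul, smul_eq_mul, zbar, neg_add, fourier_add]
  ring

lemma mulLM_zbar_mem_coeffGE {k : ℤ} {f : L2} (hf : f ∈ coeffGE (k + 1)) :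
    mulLM zbar f ∈ coeffGE k := by
  rw [mem_coeffGE] at hf ⊢
  intro m hm
  rw [cf_mulLM_zbar]
  exact hf (m + 1) (by omega)

lemma mulLM_zf_mulLM_zbar (f : L2) : mulLM zf (mulLM zbar f) = f := by
  apply Lp.ext
  filter_upwards [coeFn_mulLM memLp_zf (mulLM zbar f), coeFn_mulLM memLp_zbar f] with x hx hy
  rw [hx, hy, ← mul_assoc, zf, zbar, ← fourier_add, add_neg_cancel, fourier_zero, one_mul]

lemma projCLM_mem (U : Submodule ℂ L2) (hU : IsClosed (U : Set L2)) (f : L2) :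
    projCLM U hU f ∈ U := by
  let _ : CompleteSpace U := hU.completeSpace_coe
  exact Submodule.coe_mem (U.orthogonalProjectionOnto f)

lemma projCLM_eq_self (U : Submodule ℂ L2) (hU : IsClosed (U : Set L2)) {f : L2}
    (hf : f ∈ U) : projCLM U hU f = f := by
  let _ : CompleteSpace U := hU.completeSpace_coe
  exact (Submodule.starProjection_eq_self_iff (K := U)).mpr hf

lemma Sstar_mem_H2 (f : L2) : Sstar f ∈ H2 :=
  projCLM_mem H2 (isClosed_coeffGE 0) (mulLM zbar f)

lemma Sstar_eq_mulLM_zbar {f : L2} (hf : f ∈ coeffGE 1) : Sstar f = mulLM zbar f :=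
  projCLM_eq_self H2 (isClosed_coeffGE 0) (mulLM_zbar_mem_coeffGE (k := 0) hf)

lemma mulLM_zf_Sstar {f : L2} (hf : f ∈ coeffGE 1) : mulLM zf (Sstar f) = f := by
  rw [Sstar_eq_mulLM_zbar hf, mulLM_zf_mulLM_zbar]

section Vector

variable {n : ℕ}

lemma mem_coeffGEv {k : ℤ} {F : Vec n} : F ∈ coeffGEv n k ↔ ∀ l, F l ∈ coeffGE k := by
  simp only [coeffGEv, Submodule.mem_iInf, Submodule.mem_comap]
  rfl

lemma isClosed_coeffGEv (k : ℤ) :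
    IsClosed ((coeffGEv n k : Submodule ℂ (Vec n)) : Set (Vec n)) := by
  have h : ((coeffGEv n k : Submodule ℂ (Vec n)) : Set (Vec n)) =
      ⋂ l : Fin n, (fun F : Vec n => F l) ⁻¹' (coeffGE k : Set L2) := by
    ext F
    simp only [SetLike.mem_coe, mem_coeffGEv, Set.mem_iInter, Set.mem_preimage]
  rw [h]
  exact isClosed_iInter fun l => (isClosed_coeffGE k).preimage (PiLp.continuous_apply 2 _ l)

lemma mem_coeffGEv_one_iff {F : Vec n} : F ∈ coeffGEv n 1 ↔ F ∈ H2v n ∧ ev0 F = 0 := by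
  simp only [H2v, H2, mem_coeffGEv, mem_coeffGE_one_iff, forall_and, ev0, WithLp.toLp_eq_zero,
    funext_iff, Pi.zero_apply]

lemma projLE_mem_coeffGEv {i : ℕ} (hin : i ≤ n) {k : ℤ} {F : Vec n}
    (hF : F ∈ coeffGEv n k) : projLE hin F ∈ coeffGEv i k :=
  mem_coeffGEv.mpr fun j => mem_coeffGEv.mp hF (Fin.castLE hin j)

lemma projLE_SstarV {i : ℕ} (hin : i ≤ n) (F : Vec n) :
    projLE hin (SstarV F) = SstarV (projLE hin F) :=
  rfl

lemma SstarV_mem_H2v (F : Vec n) : SstarV F ∈ H2v n :=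
  mem_coeffGEv.mpr fun l => Sstar_mem_H2 (F l)

lemma mulVLM_zf_SstarV {F : Vec n} (hF : F ∈ coeffGEv n 1) : mulVLM zf (SstarV F) = F :=
  PiLp.ext fun l => mulLM_zf_Sstar (mem_coeffGEv.mp hF l)

end Vector

theorem projection_of_nearly_invariant_general
    {n : ℕ} (M : Submodule ℂ (Vec n)) (hMclosed : IsClosed (M : Set (Vec n)))
    (hMH : M ≤ H2v n)
    (hnear : ∀ F ∈ M, ev0 F = 0 → SstarV F ∈ M)
    (r : ℕ) (W : Fin r → Vec n)
    (hWspan : Submodule.span ℂ (Set.range W) = M ⊓ (M ⊓ coeffGEv n 1)ᗮ)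
    (i : ℕ) (hin : i ≤ n)
    (f : Vec i) (hf : f ∈ M.map (projLE hin)) (hf0 : ev0 f = 0) :
    SstarV f ∈
      M.map (projLE hin) ⊔
        (H2v i ⊓ (Submodule.span ℂ
          (Set.range fun j => projLE hin (W j))).comap (mulVLM zf)) := by
  obtain ⟨F, hFM, rfl⟩ := hf
  have : CompleteSpace ↥(M ⊓ coeffGEv n 1) :=
    (hMclosed.inter (isClosed_coeffGEv 1)).completeSpace_coe
  obtain ⟨G, hG, w, hw, rfl⟩ :=
    Submodule.exists_add_mem_mem_inf_orthogonal (N := M ⊓ coeffGEv n 1) inf_le_left hFM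
  have hSG : SstarV G ∈ M := hnear G hG.1 (mem_coeffGEv_one_iff.mp hG.2).2
  have hPw : projLE hin w ∈ coeffGEv i 1 := by
    have hPF : projLE hin (G + w) ∈ coeffGEv i 1 :=
      mem_coeffGEv_one_iff.mpr ⟨projLE_mem_coeffGEv hin (hMH hFM), hf0⟩
    simpa using Submodule.sub_mem _ hPF (projLE_mem_coeffGEv hin hG.2)
  rw [map_add, map_add, ← projLE_SstarV hin G]
  refine Submodule.add_mem_sup ⟨SstarV G, hSG, rfl⟩
    (Submodule.mem_inf.mpr ⟨SstarV_mem_H2v _, ?_⟩)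
  rw [Submodule.mem_comap, mulVLM_zf_SstarV hPw, Set.range_comp', ← Submodule.map_span, hWspan]
  exact Submodule.mem_map_of_mem hw

/-- **Corollary 3.3.** Let `M ⊆ H²(𝔻, ℂⁿ)` be a closed nearly `S*`-invariant subspace
(defect `0`), let `W₁, …, W_r` be an orthonormal basis of `W = M ⊖ (M ∩ zH²(𝔻, ℂⁿ))`, and
let `1 ≤ i ≤ n`.  Then `M_i = P_i(M)` is nearly `S*`-invariant with defect space
`span{P_i W₁, …, P_i W_r}/z ∩ H²(𝔻, ℂⁱ)`. -/
theorem projection_of_nearly_invariant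
    {n : ℕ} (M : Submodule ℂ (Vec n)) (hMclosed : IsClosed (M : Set (Vec n)))
    (hMH : M ≤ H2v n)
    (hnear : ∀ F ∈ M, ev0 F = 0 → SstarV F ∈ M)
    (r : ℕ) (W : Fin r → Vec n)
    (hWon : Orthonormal ℂ W)
    (hWmem : ∀ j, W j ∈ M ⊓ (M ⊓ coeffGEv n 1)ᗮ)
    (hWspan : Submodule.span ℂ (Set.range W) = M ⊓ (M ⊓ coeffGEv n 1)ᗮ)
    (i : ℕ) (hi1 : 1 ≤ i) (hin : i ≤ n)
    (f : Vec i) (hf : f ∈ M.map (projLE hin)) (hf0 : ev0 f = 0) :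
    SstarV f ∈
      M.map (projLE hin) ⊔
        (H2v i ⊓ (Submodule.span ℂ
          (Set.range fun j => projLE hin (W j))).comap (mulVLM zf)) :=
  projection_of_nearly_invariant_general M hMclosed hMH hnear r W hWspan i hin f hf hf0

end Paper
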